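/- Let G = (V, ω) be a finite weighted graph with vertex measure μ, let h, f : V → ℝ with f_i > 0 for all i, and let α ≥ p > 1. Set β = inf{I(φ) : φ ≥ 0, φ ≢ 0}. If φ : V → ℝ satisfies φ ≥ 0, ∫_V f φ^α dμ = 1 and I(φ) ≤ 1 + β, then ‖φ‖_{W^{1,p}(G)}^p ≤ 1 + β + (1 + |h|_M) · Vol(G)^{1 − p/α} · f_m^{−p/α}, where |h|_M = max_{i∈V}|h_i|, f_m = min_{i∈V} f_i, and Vol(G) = Σ_{i∈V} μ_i. -/
import Mathlib


/-- The gradient energy `∫_E |∇φ|^p dω = (1/2) ∑_{i,j} ω_ij |φ_j − φ_i|^p`. -/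
noncomputable def gradEnergy {V : Type*} [Fintype V] (ω : V → V → ℝ) (p : ℝ)
    (φ : V → ℝ) : ℝ :=
  (1 / 2) * ∑ i, ∑ j, ω i j * |φ j - φ i| ^ p

/-- The energy functional
`I(φ) = (∫_E |∇φ|^p dω − ∫_V h φ^p dμ) (∫_V f φ^α dμ)^{−p/α}`. -/
noncomputable def energy {V : Type*} [Fintype V] (μ : V → ℝ) (ω : V → V → ℝ)
    (h f : V → ℝ) (p α : ℝ) (φ : V → ℝ) : ℝ :=
  (gradEnergy ω p φ - ∑ i, μ i * (h i * φ i ^ p)) *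
    (∑ i, μ i * (f i * φ i ^ α)) ^ (-(p / α))

/-- If `φ ≥ 0`, `∫_V f φ^α dμ = 1` and `I(φ) ≤ 1 + β` with
`β = inf {I(ψ) : ψ ≥ 0, ψ ≢ 0}`, then
`‖φ‖_{W^{1,p}}^p ≤ 1 + β + (1 + |h|_M) Vol(G)^{1−p/α} f_m^{−p/α}`. -/
theorem sobolev_norm_bound_of_normalized
    {V : Type*} [Fintype V] [Nonempty V]
    (μ : V → ℝ) (hμ : ∀ i, 0 < μ i)
    (ω : V → V → ℝ) (hωsym : ∀ i j, ω i j = ω j i)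
    (hωnonneg : ∀ i j, 0 ≤ ω i j) (hωloop : ∀ i, ω i i = 0)
    (h f : V → ℝ) (hf : ∀ i, 0 < f i)
    (p α : ℝ) (hp : 1 < p) (hpα : p ≤ α)
    (β : ℝ)
    (hβ : β = sInf {y : ℝ | ∃ ψ : V → ℝ, (∀ i, 0 ≤ ψ i) ∧ ψ ≠ 0 ∧
      energy μ ω h f p α ψ = y})
    (φ : V → ℝ) (hφnonneg : ∀ i, 0 ≤ φ i)
    (hnorm : ∑ i, μ i * (f i * φ i ^ α) = 1)
    (hI : energy μ ω h f p α φ ≤ 1 + β) :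
    gradEnergy ω p φ + ∑ i, μ i * |φ i| ^ p
      ≤ 1 + β + (1 + Finset.univ.sup' Finset.univ_nonempty (fun i => |h i|)) *
          (∑ i, μ i) ^ (1 - p / α) *
          (Finset.univ.inf' Finset.univ_nonempty f) ^ (-(p / α)) := by
  have hppos : (0:ℝ) < p := lt_trans one_pos hp
  have hαpos : (0:ℝ) < α := lt_of_lt_of_le hppos hpα
  set Vol := ∑ i : V, μ i with hVoldef
  have hVolpos : 0 < Vol := Finset.sum_pos (fun i _ => hμ i) Finset.univ_nonempty
  set H := Finset.univ.sup' Finset.univ_nonempty (fun i => |h i|) with hHdef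
  set fm := Finset.univ.inf' Finset.univ_nonempty f with hfmdef
  have hfmpos : 0 < fm := by
    obtain ⟨i, -, hi⟩ := Finset.exists_mem_eq_inf' Finset.univ_nonempty f
    rw [hfmdef, hi]; exact hf i
  have hHnn : 0 ≤ H := by
    rw [hHdef]
    exact le_trans (abs_nonneg (h (Classical.arbitrary V)))
      (Finset.le_sup' (fun i => |h i|) (Finset.mem_univ (Classical.arbitrary V)))
  set S := ∑ i, μ i * φ i ^ p with hSdef
  set T := ∑ i, μ i * φ i ^ α with hTdef
  have hTnn : 0 ≤ T :=
    Finset.sum_nonneg fun i _ => mul_nonneg (hμ i).le (Real.rpow_nonneg (hφnonneg i) α)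
  have hSnn : 0 ≤ S :=
    Finset.sum_nonneg fun i _ => mul_nonneg (hμ i).le (Real.rpow_nonneg (hφnonneg i) p)
  have hfmT : fm * T ≤ 1 := by
    rw [← hnorm, hTdef, Finset.mul_sum]
    refine Finset.sum_le_sum fun i _ => ?_
    have h1 : fm ≤ f i := Finset.inf'_le f (Finset.mem_univ i)
    have h2 : 0 ≤ μ i * φ i ^ α :=
      mul_nonneg (hμ i).le (Real.rpow_nonneg (hφnonneg i) α)
    calc fm * (μ i * φ i ^ α) ≤ f i * (μ i * φ i ^ α) := mul_le_mul_of_nonneg_right h1 h2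
      _ = μ i * (f i * φ i ^ α) := by ring
  have hTrpow : T ^ (p/α) ≤ fm ^ (-(p/α)) := by
    have hTinv : T ≤ fm⁻¹ := by
      rw [← one_div, le_div_iff₀ hfmpos]
      linarith [hfmT, mul_comm fm T]
    calc T ^ (p/α) ≤ (fm⁻¹) ^ (p/α) :=
          Real.rpow_le_rpow hTnn hTinv (by positivity)
      _ = fm ^ (-(p/α)) := by
          rw [Real.inv_rpow hfmpos.le, Real.rpow_neg hfmpos.le]
  have hjensen : S / Vol ≤ (T / Vol) ^ (p/α) := by
    have hw : ∀ i ∈ Finset.univ, (0:ℝ) ≤ μ i / Vol := fun i _ => div_nonneg (hμ i).le hVolpos.le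
    have hw' : ∑ i : V, μ i / Vol = 1 := by
      rw [← Finset.sum_div, ← hVoldef, div_self hVolpos.ne']
    have hz : ∀ i ∈ Finset.univ, (0:ℝ) ≤ φ i ^ p := fun i _ => Real.rpow_nonneg (hφnonneg i) p
    have hq : (1:ℝ) ≤ α / p := (one_le_div hppos).mpr hpα
    have key := Real.arith_mean_le_rpow_mean Finset.univ (fun i => μ i / Vol)
      (fun i => φ i ^ p) hw hw' hz hq
    have hzz : ∀ i : V, (φ i ^ p) ^ (α/p) = φ i ^ α := fun i => by
      rw [← Real.rpow_mul (hφnonneg i)]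
      congr 1
      field_simp
    simp only [hzz, one_div_div] at key
    have e1 : S / Vol = ∑ i : V, μ i / Vol * φ i ^ p := by
      rw [hSdef, Finset.sum_div]
      exact Finset.sum_congr rfl fun i _ => by ring
    have e2 : T / Vol = ∑ i : V, μ i / Vol * φ i ^ α := by
      rw [hTdef, Finset.sum_div]
      exact Finset.sum_congr rfl fun i _ => by ring
    rw [e1, e2]
    exact key
  have hSbound : S ≤ Vol ^ (1 - p/α) * T ^ (p/α) := by
    calc S = Vol * (S / Vol) := by field_simp
      _ ≤ Vol * (T / Vol) ^ (p/α) := mul_le_mul_of_nonneg_left hjensen hVolpos.le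
      _ = Vol ^ (1 - p/α) * T ^ (p/α) := by
          rw [Real.div_rpow hTnn hVolpos.le, Real.rpow_sub hVolpos, Real.rpow_one]
          ring
  rw [energy, hnorm, Real.one_rpow, mul_one] at hI
  have habsφ : ∑ i, μ i * |φ i| ^ p = S :=
    Finset.sum_congr rfl fun i _ => by rw [abs_of_nonneg (hφnonneg i)]
  rw [habsφ]
  have hcomb : (∑ i, μ i * (h i * φ i ^ p)) + S ≤ (1 + H) * S := by
    rw [hSdef, ← Finset.sum_add_distrib, Finset.mul_sum]
    refine Finset.sum_le_sum fun i _ => ?_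
    have hhi : h i ≤ H := by
      rw [hHdef]
      exact le_trans (le_abs_self _) (Finset.le_sup' (fun i => |h i|) (Finset.mem_univ i))
    have h2 : 0 ≤ μ i * φ i ^ p :=
      mul_nonneg (hμ i).le (Real.rpow_nonneg (hφnonneg i) p)
    nlinarith [mul_le_mul_of_nonneg_left hhi h2]
  have hfinal : (1 + H) * S ≤ (1 + H) * Vol ^ (1 - p/α) * fm ^ (-(p/α)) := by
    calc (1 + H) * S ≤ (1 + H) * (Vol ^ (1 - p/α) * T ^ (p/α)) :=
          mul_le_mul_of_nonneg_left hSbound (by linarith)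
      _ ≤ (1 + H) * (Vol ^ (1 - p/α) * fm ^ (-(p/α))) := by
          refine mul_le_mul_of_nonneg_left ?_ (by linarith)
          exact mul_le_mul_of_nonneg_left hTrpow (Real.rpow_nonneg hVolpos.le _)
      _ = (1 + H) * Vol ^ (1 - p/α) * fm ^ (-(p/α)) := by ring
  linarith
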